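/- arXiv:1105.0694 — 3 statements merged into one kernel-verified Lean document; each statement's English description precedes it below -/
import Mathlib

section
/- Let T > 0, θ ∈ (0,1) and C > 0. Let I be a countable index set and let (αᵢ, βᵢ), i ∈ I, be pairwise disjoint nonempty open subintervals of (0,T) (so 0 ≤ αᵢ < βᵢ ≤ T). Let g : ℝ → ℝ be nonnegative and integrable on (0,T). Assume that for every i ∈ I and every t ∈ (αᵢ, βᵢ) one has C·(βᵢ − t)^{−θ} ≤ 1 + g(t). Then ∑_{i∈I} (βᵢ − αᵢ)^{1−θ} ≤ ((1−θ)/C)·(T + ∫₀ᵀ g(t) dt), and in particular this sum is finite. -/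
/-!
Integrating `C (βᵢ - t)^(-θ) ≤ 1 + g t` over `(αᵢ, βᵢ)` gives
`C (βᵢ - αᵢ)^(1-θ) / (1-θ) ≤ ∫_{αᵢ}^{βᵢ} (1 + g)`, and the intervals are disjoint subsets of `(0, T)`,
so summing over `i` bounds the sum by `((1-θ)/C) ∫₀ᵀ (1 + g)`.
-/

open MeasureTheory Set ENNReal

theorem integral_sub_rpow_neg {a b θ : ℝ} (hθ : θ < 1) :
    ∫ t in a..b, (b - t) ^ (-θ) = (b - a) ^ (1 - θ) / (1 - θ) := by
  rw [intervalIntegral.integral_comp_sub_left (fun x => x ^ (-θ)), sub_self,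
    integral_rpow (Or.inl (by linarith)), Real.zero_rpow (by linarith)]
  ring_nf

theorem intervalIntegrable_sub_rpow_neg {a b θ : ℝ} (hθ : θ < 1) :
    IntervalIntegrable (fun t => (b - t) ^ (-θ)) volume a b := by
  simpa using ((intervalIntegral.intervalIntegrable_rpow' (a := b - b) (b := b - a)
    (by linarith : -1 < -θ)).comp_sub_left b).symm

theorem lintegral_Ioo_sub_rpow_neg {a b θ : ℝ} (hab : a ≤ b) (hθ : θ < 1) :
    ∫⁻ t in Ioo a b, ENNReal.ofReal ((b - t) ^ (-θ)) =
      ENNReal.ofReal ((b - a) ^ (1 - θ) / (1 - θ)) := by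
  have hint : IntegrableOn (fun t => (b - t) ^ (-θ)) (Ioo a b) :=
    (intervalIntegrable_iff_integrableOn_Ioo_of_le hab).1 (intervalIntegrable_sub_rpow_neg hθ)
  have hnonneg : 0 ≤ᵐ[volume.restrict (Ioo a b)] fun t => (b - t) ^ (-θ) := by
    filter_upwards [ae_restrict_mem measurableSet_Ioo] with t ht
    exact Real.rpow_nonneg (by linarith [ht.2]) _
  rw [← ofReal_integral_eq_lintegral_ofReal hint hnonneg, ← integral_Ioc_eq_integral_Ioo,
    ← intervalIntegral.integral_of_le hab, integral_sub_rpow_neg hθ]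

theorem ofReal_sub_rpow_le_mul_setLIntegral {a b θ C : ℝ} {f : ℝ → ℝ}
    (hab : a ≤ b) (hθ : θ < 1) (hC : 0 < C)
    (hf : ∀ t ∈ Ioo a b, C * (b - t) ^ (-θ) ≤ f t) :
    ENNReal.ofReal ((b - a) ^ (1 - θ)) ≤
      ENNReal.ofReal ((1 - θ) / C) * ∫⁻ t in Ioo a b, ENNReal.ofReal (f t) := by
  have h1θ : 0 < 1 - θ := by linarith
  calc ENNReal.ofReal ((b - a) ^ (1 - θ))
      = ENNReal.ofReal ((1 - θ) / C) * ENNReal.ofReal C *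
          ∫⁻ t in Ioo a b, ENNReal.ofReal ((b - t) ^ (-θ)) := by
        rw [lintegral_Ioo_sub_rpow_neg hab hθ, ← ENNReal.ofReal_mul (by positivity),
          ← ENNReal.ofReal_mul (by positivity)]
        congr 1
        field_simp
    _ = ENNReal.ofReal ((1 - θ) / C) *
          ∫⁻ t in Ioo a b, ENNReal.ofReal (C * (b - t) ^ (-θ)) := by
        rw [mul_assoc, ← lintegral_const_mul' _ _ ofReal_ne_top]
        simp_rw [ENNReal.ofReal_mul hC.le]
    _ ≤ ENNReal.ofReal ((1 - θ) / C) * ∫⁻ t in Ioo a b, ENNReal.ofReal (f t) := by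
        gcongr 1
        exact setLIntegral_mono' measurableSet_Ioo fun t ht => ENNReal.ofReal_le_ofReal (hf t ht)

theorem tsum_setLIntegral_le_of_pairwise_disjoint {α ι : Type*} [MeasurableSpace α] [Countable ι]
    {μ : Measure α} {f : α → ℝ≥0∞} {s : ι → Set α} {t : Set α}
    (hs : ∀ i, MeasurableSet (s i)) (hdisj : Pairwise (Function.onFun Disjoint s))
    (hst : ∀ i, s i ⊆ t) :
    ∑' i, ∫⁻ x in s i, f x ∂μ ≤ ∫⁻ x in t, f x ∂μ := by
  rw [← lintegral_iUnion hs hdisj]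
  exact lintegral_mono_set (iUnion_subset hst)

theorem lintegral_Ioo_ofReal_one_add {T : ℝ} {g : ℝ → ℝ} (hT : 0 ≤ T)
    (hg0 : ∀ t ∈ Ioo 0 T, 0 ≤ g t) (hg : IntegrableOn g (Ioo 0 T)) :
    ∫⁻ t in Ioo 0 T, ENNReal.ofReal (1 + g t) = ENNReal.ofReal (T + ∫ t in Ioo 0 T, g t) := by
  have hone : IntegrableOn (fun _ => (1 : ℝ)) (Ioo 0 T) := integrableOn_const measure_Ioo_lt_top.ne
  have hint : IntegrableOn (fun t => 1 + g t) (Ioo 0 T) := hone.add hg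
  rw [← ofReal_integral_eq_lintegral_ofReal hint, integral_add hone hg]
  · simp [hT]
  · filter_upwards [ae_restrict_mem measurableSet_Ioo] with t ht
    exact add_nonneg zero_le_one (hg0 t ht)

/-- Abstract form of Lemma 4.2: if on each of countably many pairwise disjoint
subintervals `(aᵢ, bᵢ)` of `(0,T)` one has `C (bᵢ - t)^(-θ) ≤ 1 + g t` with `g ≥ 0`
integrable, then `∑ᵢ (bᵢ - aᵢ)^(1-θ) ≤ ((1-θ)/C) (T + ∫₀ᵀ g)` (in particular finite). -/
theorem sum_interval_lengths_pow_le {I : Type*} [Countable I] (T θ C : ℝ) (hT : 0 < T)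
    (hθ : θ ∈ Set.Ioo (0 : ℝ) 1) (hC : 0 < C)
    (a b : I → ℝ) (hab : ∀ i, 0 ≤ a i ∧ a i < b i ∧ b i ≤ T)
    (hdisj : Pairwise (Function.onFun Disjoint fun i => Set.Ioo (a i) (b i)))
    (g : ℝ → ℝ) (hg0 : ∀ t ∈ Set.Ioo (0 : ℝ) T, 0 ≤ g t)
    (hgint : MeasureTheory.IntegrableOn g (Set.Ioo 0 T))
    (hbound : ∀ i, ∀ t ∈ Set.Ioo (a i) (b i), C * (b i - t) ^ (-θ) ≤ 1 + g t) :
    ∑' i, ENNReal.ofReal ((b i - a i) ^ (1 - θ)) ≤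
      ENNReal.ofReal (((1 - θ) / C) * (T + ∫ t in Set.Ioo (0 : ℝ) T, g t)) := by
  have hk : 0 ≤ (1 - θ) / C := div_nonneg (by linarith [hθ.2]) hC.le
  have hsub : ∀ i, Ioo (a i) (b i) ⊆ Ioo 0 T := fun i =>
    Ioo_subset_Ioo (hab i).1 (hab i).2.2
  calc ∑' i, ENNReal.ofReal ((b i - a i) ^ (1 - θ))
      ≤ ∑' i, ENNReal.ofReal ((1 - θ) / C) * ∫⁻ t in Ioo (a i) (b i), ENNReal.ofReal (1 + g t) :=
        ENNReal.tsum_le_tsum fun i =>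
          ofReal_sub_rpow_le_mul_setLIntegral (hab i).2.1.le hθ.2 hC (hbound i)
    _ = ENNReal.ofReal ((1 - θ) / C) *
          ∑' i, ∫⁻ t in Ioo (a i) (b i), ENNReal.ofReal (1 + g t) := ENNReal.tsum_mul_left
    _ ≤ ENNReal.ofReal ((1 - θ) / C) * ∫⁻ t in Ioo 0 T, ENNReal.ofReal (1 + g t) := by
        gcongr
        exact tsum_setLIntegral_le_of_pairwise_disjoint (fun _ => measurableSet_Ioo) hdisj hsub
    _ = ENNReal.ofReal (((1 - θ) / C) * (T + ∫ t in Ioo 0 T, g t)) := by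
        rw [lintegral_Ioo_ofReal_one_add hT.le hg0 hgint, ENNReal.ofReal_mul hk]
end

section
/- Let T > 0 and d ∈ (0,1). Let (αᵢ, βᵢ), i ∈ ℕ, be pairwise disjoint open subintervals of (0,T) with 0 ≤ αᵢ < βᵢ ≤ T, and set S = [0,T] \ ⋃ᵢ (αᵢ, βᵢ). Assume that S has one-dimensional Lebesgue measure zero and that ∑ᵢ (βᵢ − αᵢ)^d < ∞. Then the d-dimensional Hausdorff measure of S is zero. -/
/-!
For each `n`, the part of `[0,T]` not covered by the first `n` intervals is a finite union of
closed intervals ("gaps") covering `S`. A later interval that meets a gap lies inside it, and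
since `S` is null, the length of a gap is the total length of the later intervals it contains.
By subadditivity of `x ↦ x ^ d`, the `d`-th powers of the diameters of the gaps therefore sum to
at most the tail `∑_{k ≥ n} (b k - a k) ^ d`, which tends to `0`.
-/

open Set MeasureTheory Filter Topology
open scoped ENNReal

theorem ENNReal.rpow_tsum_le_tsum_rpow {ι : Type*} (g : ι → ℝ≥0∞) {p : ℝ} (hp0 : 0 < p)
    (hp1 : p ≤ 1) : (∑' i, g i) ^ p ≤ ∑' i, g i ^ p := by
  rw [← ENNReal.le_rpow_inv_iff hp0, ENNReal.tsum_eq_iSup_sum]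
  refine iSup_le fun s => (ENNReal.le_rpow_inv_iff hp0).2 ?_
  calc (∑ i ∈ s, g i) ^ p ≤ ∑ i ∈ s, g i ^ p :=
        Finset.le_sum_of_subadditive (· ^ p) (ENNReal.zero_rpow_of_pos hp0).le
          (fun x y => ENNReal.rpow_add_le_add_rpow x y hp0.le hp1) s g
    _ ≤ ∑' i, g i ^ p := ENNReal.sum_le_tsum s

theorem le_or_le_of_disjoint_Ioo {α : Type*} [LinearOrder α] [DenselyOrdered α] {a b c d : α}
    (h : Disjoint (Ioo a b) (Ioo c d)) (hab : a < b) (hcd : c < d) : b ≤ c ∨ d ≤ a := by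
  rw [Ioo_disjoint_Ioo, min_le_iff, le_max_iff, le_max_iff] at h
  rcases h with (h | h) | (h | h)
  · exact absurd h hab.not_ge
  · exact .inl h
  · exact .inr h
  · exact absurd h hcd.not_ge

theorem MeasureTheory.Measure.sum_measure_inter_rpow_le {ι α : Type*} [Fintype ι]
    [MeasurableSpace α] (μ : Measure α) {G : ι → Set α} (hG : Pairwise (Function.onFun Disjoint G))
    {J : Set α} (hJ : ∀ i, (G i ∩ J).Nonempty → J ⊆ G i) {p : ℝ} (hp : 0 < p) :
    ∑ i, μ (G i ∩ J) ^ p ≤ μ J ^ p := by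
  by_cases hmeet : ∃ i, (G i ∩ J).Nonempty
  · obtain ⟨i, hi⟩ := hmeet
    have hother : ∀ j ≠ i, G j ∩ J = ∅ := fun j hj =>
      Set.subset_empty_iff.1 fun x hx => Set.disjoint_left.1 (hG hj) hx.1 (hJ i hi hx.2)
    rw [Finset.sum_eq_single i (fun j _ hj => by rw [hother j hj, measure_empty,
      ENNReal.zero_rpow_of_pos hp]) (absurd (Finset.mem_univ i))]
    gcongr
    exact inter_subset_right
  · push Not at hmeet
    simp [hmeet, ENNReal.zero_rpow_of_pos hp]

theorem Set.OrdConnected.ediam_le_volume {s : Set ℝ} (hs : s.OrdConnected) :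
    Metric.ediam s ≤ volume s := by
  refine Metric.ediam_le fun x hx y hy => ?_
  wlog hxy : x ≤ y generalizing x y
  · rw [edist_comm]
    exact this y hy x hx (le_of_not_ge hxy)
  calc edist x y = volume (Icc x y) := by
        rw [Real.volume_Icc, edist_dist, Real.dist_eq, abs_sub_comm,
          abs_of_nonneg (sub_nonneg.2 hxy)]
    _ ≤ volume s := measure_mono (hs.out hx hy)

theorem ediam_rpow_le_tsum_volume_inter_rpow {s N : Set ℝ} {U : ℕ → Set ℝ} {p : ℝ}
    (hs : s.OrdConnected) (hN : volume N = 0) (hcov : s ⊆ N ∪ ⋃ k, U k) (hp0 : 0 < p)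
    (hp1 : p ≤ 1) : Metric.ediam s ^ p ≤ ∑' k, volume (s ∩ U k) ^ p := by
  have hcov' : s ⊆ N ∪ ⋃ k, s ∩ U k := by
    rw [← inter_iUnion]
    exact fun x hx => (hcov hx).imp_right (⟨hx, ·⟩)
  have hvol : volume s ≤ ∑' k, volume (s ∩ U k) :=
    calc volume s ≤ volume (N ∪ ⋃ k, s ∩ U k) := measure_mono hcov'
      _ ≤ volume N + volume (⋃ k, s ∩ U k) := measure_union_le _ _
      _ = volume (⋃ k, s ∩ U k) := by rw [hN, zero_add]
      _ ≤ ∑' k, volume (s ∩ U k) := measure_iUnion_le _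
  calc Metric.ediam s ^ p ≤ volume s ^ p := ENNReal.rpow_le_rpow hs.ediam_le_volume hp0.le
    _ ≤ (∑' k, volume (s ∩ U k)) ^ p := ENNReal.rpow_le_rpow hvol hp0.le
    _ ≤ ∑' k, volume (s ∩ U k) ^ p := ENNReal.rpow_tsum_le_tsum_rpow _ hp0 hp1

theorem MeasureTheory.Measure.hausdorffMeasure_eq_zero_of_tendsto_sum_ediam_rpow {X : Type*}
    [EMetricSpace X] [MeasurableSpace X] [BorelSpace X] {d : ℝ} (hd : 0 < d) {s : Set X}
    {ι : ℕ → Type*} [∀ n, Fintype (ι n)] (t : ∀ n, ι n → Set X) (hcov : ∀ n, s ⊆ ⋃ i, t n i)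
    (hlim : Tendsto (fun n => ∑ i, Metric.ediam (t n i) ^ d) atTop (𝓝 0)) : μH[d] s = 0 := by
  set c := fun n => ∑ i, Metric.ediam (t n i) ^ d
  have hr : Tendsto (fun n => c n ^ d⁻¹) atTop (𝓝 0) :=
    (ENNReal.continuous_rpow_const.tendsto' 0 0 (ENNReal.zero_rpow_of_pos (inv_pos.2 hd))).comp hlim
  have hdiam : ∀ n i, Metric.ediam (t n i) ≤ c n ^ d⁻¹ := fun n i =>
    (ENNReal.le_rpow_inv_iff hd).2 <| Finset.single_le_sum
      (f := fun j => Metric.ediam (t n j) ^ d) (fun j _ => zero_le) (Finset.mem_univ i)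
  refine le_antisymm ?_ zero_le
  calc μH[d] s ≤ liminf c atTop :=
        hausdorffMeasure_le_liminf_sum d s _ hr t (.of_forall hdiam) (.of_forall hcov)
    _ = 0 := hlim.liminf_eq

section Gaps

variable (T : ℝ) (a b : ℕ → ℝ)

/-- The component of `[0,T] \ ⋃_{j<n} (a j, b j)` lying to the right of the `j`-th interval
exactly when `f j` holds; most choices of `f` give the empty set. -/
def gap (n : ℕ) (f : Fin n → Bool) : Set ℝ :=
  Icc 0 T ∩ ⋂ j : Fin n, if f j then Ici (b j) else Iic (a j)

variable {T a b} {n : ℕ}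

theorem mem_gap {f : Fin n → Bool} {x : ℝ} :
    x ∈ gap T a b n f ↔ x ∈ Icc 0 T ∧ ∀ j : Fin n, if f j then b j ≤ x else x ≤ a j := by
  simp only [gap, mem_inter_iff, mem_iInter]
  refine and_congr_right fun _ => forall_congr' fun j => ?_
  split <;> rfl

theorem ordConnected_gap (f : Fin n → Bool) : (gap T a b n f).OrdConnected := by
  refine ordConnected_Icc.inter (ordConnected_iInter fun j => ?_)
  split <;> infer_instance

theorem pairwise_disjoint_gap (hab : ∀ i, a i < b i) :
    Pairwise (Function.onFun Disjoint (gap T a b n)) := by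
  intro f g hfg
  obtain ⟨j, hj⟩ := Function.ne_iff.1 hfg
  refine Set.disjoint_left.2 fun x hxf hxg => ?_
  have hf := (mem_gap.1 hxf).2 j
  have hg := (mem_gap.1 hxg).2 j
  cases hfj : f j <;> cases hgj : g j <;>
    simp only [hfj, hgj, ne_eq, not_true_eq_false, if_true, if_false, Bool.false_eq_true]
      at hj hf hg <;>
    linarith [hab j]

theorem diff_iUnion_Ioo_subset_iUnion_gap :
    Icc 0 T \ ⋃ i, Ioo (a i) (b i) ⊆ ⋃ f, gap T a b n f := by
  rintro x ⟨hx, hxI⟩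
  refine mem_iUnion.2 ⟨fun j => decide (b j ≤ x), mem_gap.2 ⟨hx, fun j => ?_⟩⟩
  by_cases hbx : b j ≤ x
  · simp [hbx]
  · simp only [hbx, decide_false]
    by_contra hxa
    exact hxI (mem_iUnion.2 ⟨j, not_le.1 hxa, not_le.1 hbx⟩)

theorem gap_subset_diff_union {f : Fin n → Bool} :
    gap T a b n f ⊆ (Icc 0 T \ ⋃ i, Ioo (a i) (b i)) ∪ ⋃ k, Ioo (a (k + n)) (b (k + n)) := by
  intro x hx
  obtain ⟨hxT, hxf⟩ := mem_gap.1 hx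
  by_cases hxI : x ∈ ⋃ i, Ioo (a i) (b i)
  · obtain ⟨i, hi⟩ := mem_iUnion.1 hxI
    have hni : n ≤ i := by
      by_contra! hin
      have := hxf ⟨i, hin⟩
      split at this <;> linarith [hi.1, hi.2]
    exact Or.inr (mem_iUnion.2 ⟨i - n, by rwa [Nat.sub_add_cancel hni]⟩)
  · exact Or.inl ⟨hxT, hxI⟩

theorem Ioo_subset_gap (hab : ∀ i, 0 ≤ a i ∧ a i < b i ∧ b i ≤ T)
    (hdisj : Pairwise (Function.onFun Disjoint fun i => Ioo (a i) (b i)))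
    {f : Fin n → Bool} {k : ℕ} (hk : n ≤ k) (hne : (gap T a b n f ∩ Ioo (a k) (b k)).Nonempty) :
    Ioo (a k) (b k) ⊆ gap T a b n f := by
  obtain ⟨x, hxf, hxk⟩ := hne
  intro y hy
  refine mem_gap.2 ⟨⟨(hab k).1.trans hy.1.le, hy.2.le.trans (hab k).2.2⟩, fun j => ?_⟩
  have hjk : (j : ℕ) ≠ k := (j.2.trans_le hk).ne
  have hxj := (mem_gap.1 hxf).2 j
  rcases le_or_le_of_disjoint_Ioo (hdisj hjk) (hab j).2.1 (hab k).2.1 with h | h <;>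
    cases hfj : f j <;> simp only [hfj, if_true, if_false, Bool.false_eq_true] at hxj ⊢ <;>
    linarith [hy.1, hy.2, hxk.1, hxk.2, (hab j).2.1, (hab k).2.1]

theorem sum_ediam_gap_rpow_le (hab : ∀ i, 0 ≤ a i ∧ a i < b i ∧ b i ≤ T)
    (hdisj : Pairwise (Function.onFun Disjoint fun i => Ioo (a i) (b i)))
    (hnull : volume (Icc 0 T \ ⋃ i, Ioo (a i) (b i)) = 0) {d : ℝ} (hd0 : 0 < d) (hd1 : d ≤ 1) :
    ∑ f, Metric.ediam (gap T a b n f) ^ d ≤ ∑' k, volume (Ioo (a (k + n)) (b (k + n))) ^ d :=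
  calc ∑ f, Metric.ediam (gap T a b n f) ^ d
      ≤ ∑ f, ∑' k, volume (gap T a b n f ∩ Ioo (a (k + n)) (b (k + n))) ^ d :=
        Finset.sum_le_sum fun f _ => ediam_rpow_le_tsum_volume_inter_rpow (ordConnected_gap f)
          hnull gap_subset_diff_union hd0 hd1
    _ = ∑' k, ∑ f, volume (gap T a b n f ∩ Ioo (a (k + n)) (b (k + n))) ^ d :=
        (Summable.tsum_finsetSum fun _ _ => ENNReal.summable).symm
    _ ≤ ∑' k, volume (Ioo (a (k + n)) (b (k + n))) ^ d :=
        ENNReal.tsum_le_tsum fun k => volume.sum_measure_inter_rpow_le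
          (pairwise_disjoint_gap fun i => (hab i).2.1)
          (fun _ => Ioo_subset_gap hab hdisj (Nat.le_add_left n k)) hd0

end Gaps

theorem hausdorff_measure_zero_of_summable_pow_general (T d : ℝ)
    (hd : d ∈ Set.Ioo (0 : ℝ) 1)
    (a b : ℕ → ℝ) (hab : ∀ i, 0 ≤ a i ∧ a i < b i ∧ b i ≤ T)
    (hdisj : Pairwise (Function.onFun Disjoint fun i => Set.Ioo (a i) (b i)))
    (S : Set ℝ) (hS : S = Set.Icc 0 T \ ⋃ i, Set.Ioo (a i) (b i))
    (hnull : MeasureTheory.volume S = 0)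
    (hsum : Summable fun i => (b i - a i) ^ d) :
    MeasureTheory.Measure.hausdorffMeasure d S = 0 := by
  obtain ⟨hd0, hd1⟩ := hd
  subst hS
  have hlen : ∀ i, volume (Ioo (a i) (b i)) ^ d = ENNReal.ofReal ((b i - a i) ^ d) := fun i => by
    rw [Real.volume_Ioo, ENNReal.ofReal_rpow_of_nonneg (sub_nonneg.2 (hab i).2.1.le) hd0.le]
  have htail : Tendsto (fun n => ∑' k, volume (Ioo (a (k + n)) (b (k + n))) ^ d) atTop (𝓝 0) := by
    refine ENNReal.tendsto_sum_nat_add (fun i => volume (Ioo (a i) (b i)) ^ d) ?_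
    rw [tsum_congr hlen, ← ENNReal.ofReal_tsum_of_nonneg
      (fun i => Real.rpow_nonneg (sub_nonneg.2 (hab i).2.1.le) d) hsum]
    exact ENNReal.ofReal_ne_top
  refine Measure.hausdorffMeasure_eq_zero_of_tendsto_sum_ediam_rpow hd0 (gap T a b)
    (fun _ => diff_iUnion_Ioo_subset_iUnion_gap) ?_
  exact tendsto_of_tendsto_of_tendsto_of_le_of_le tendsto_const_nhds htail (fun n => zero_le)
    fun _ => sum_ediam_gap_rpow_le hab hdisj hnull hd0 hd1.le

/-- Covering argument (Step 3 of Theorem 4.3): if `S = [0,T] \ ⋃ᵢ (aᵢ, bᵢ)` with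
pairwise disjoint open subintervals of `(0,T)`, `S` has Lebesgue measure zero, and
`∑ᵢ (bᵢ - aᵢ)^d < ∞` for some `d ∈ (0,1)`, then the `d`-dimensional Hausdorff measure
of `S` is zero. -/
theorem hausdorff_measure_zero_of_summable_pow (T d : ℝ) (hT : 0 < T)
    (hd : d ∈ Set.Ioo (0 : ℝ) 1)
    (a b : ℕ → ℝ) (hab : ∀ i, 0 ≤ a i ∧ a i < b i ∧ b i ≤ T)
    (hdisj : Pairwise (Function.onFun Disjoint fun i => Set.Ioo (a i) (b i)))
    (S : Set ℝ) (hS : S = Set.Icc 0 T \ ⋃ i, Set.Ioo (a i) (b i))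
    (hnull : MeasureTheory.volume S = 0)
    (hsum : Summable fun i => (b i - a i) ^ d) :
    MeasureTheory.Measure.hausdorffMeasure d S = 0 :=
  hausdorff_measure_zero_of_summable_pow_general T d hd a b hab hdisj S hS hnull hsum
end

section
/- Let T > 0, θ ∈ (0,1) and C > 0. Let (αᵢ, βᵢ), i ∈ ℕ, be pairwise disjoint open subintervals of (0,T) with 0 ≤ αᵢ < βᵢ ≤ T, and set S = [0,T] \ ⋃ᵢ (αᵢ, βᵢ). Let g : ℝ → ℝ be nonnegative and integrable on (0,T). Assume that S has one-dimensional Lebesgue measure zero and that for every i and every t ∈ (αᵢ, βᵢ) one has C·(βᵢ − t)^{−θ} ≤ 1 + g(t). Then the (1−θ)-dimensional Hausdorff measure of S is zero. -/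
/-!
The rate bound gives `C (bᵢ - aᵢ)^(1-θ) ≤ ∫_{(aᵢ, bᵢ)} (1 + g)`, so `∑ᵢ (bᵢ - aᵢ)^(1-θ) < ∞`.
Removing the first `N` intervals from `[0, T]` leaves finitely many closed gaps that cover `S`.
As `S` is Lebesgue-null, each gap is filled, up to measure zero, by the later intervals it
contains, so by subadditivity of `x ↦ x^(1-θ)` its length `ℓ` satisfies
`ℓ^(1-θ) ≤ ∑ (bᵢ - aᵢ)^(1-θ)` over those intervals. Summing over the gaps, these covers of `S`
have `(1-θ)`-sums at most `∑_{i ≥ N} (bᵢ - aᵢ)^(1-θ)` and diameters at most `∑_{i ≥ N} (bᵢ - aᵢ)`;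
both tails tend to zero.
-/

open Set MeasureTheory Filter Topology ENNReal Function

namespace ENNReal

theorem rpow_finset_sum_le_sum_rpow {ι : Type*} (s : Finset ι) (f : ι → ℝ≥0∞) {p : ℝ}
    (hp0 : 0 < p) (hp1 : p ≤ 1) : (∑ i ∈ s, f i) ^ p ≤ ∑ i ∈ s, f i ^ p := by
  classical
  induction s using Finset.induction_on with
  | empty => simp [zero_rpow_of_pos hp0]
  | insert j s hj ih =>
    rw [Finset.sum_insert hj, Finset.sum_insert hj]
    exact (rpow_add_le_add_rpow _ _ hp0.le hp1).trans (add_le_add_right ih _)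

theorem rpow_tsum_le_tsum_rpow_s5 {ι : Type*} (f : ι → ℝ≥0∞) {p : ℝ} (hp0 : 0 < p) (hp1 : p ≤ 1) :
    (∑' i, f i) ^ p ≤ ∑' i, f i ^ p := by
  rw [← le_rpow_inv_iff hp0, ENNReal.tsum_eq_iSup_sum]
  exact iSup_le fun s => (le_rpow_inv_iff hp0).2 <|
    (rpow_finset_sum_le_sum_rpow s f hp0 hp1).trans (ENNReal.sum_le_tsum s)

theorem tendsto_tsum_indicator_Ici_atTop {f : ℕ → ℝ≥0∞} (hf : ∑' i, f i ≠ ∞) :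
    Tendsto (fun N => ∑' i, (Ici N).indicator f i) atTop (𝓝 0) := by
  convert (tendsto_tsum_compl_atTop_zero hf).comp tendsto_finset_range using 2 with N
  have hN : Ici N = {i | i ∉ Finset.range N} := by ext; simp
  rw [comp_apply, ← tsum_subtype, hN]
  rfl

theorem tsum_indicator_const_le {ι : Type*} {s : Set ι} (hs : s.Subsingleton) (x : ℝ≥0∞) :
    ∑' i, s.indicator (fun _ => x) i ≤ x := by
  rw [← tsum_subtype]
  rcases hs.eq_empty_or_singleton with rfl | ⟨j, rfl⟩ <;> simp

end ENNReal

theorem Set.le_and_le_of_notMem_Ioo {α : Type*} [LinearOrder α] {a b p q u : α}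
    (hu : u ∈ Ioo a b) (hu' : u ∈ Ioo p q) (hp : p ∉ Ioo a b) (hq : q ∉ Ioo a b) :
    p ≤ a ∧ b ≤ q :=
  ⟨not_lt.1 fun h => hp ⟨h, hu'.1.trans hu.2⟩, not_lt.1 fun h => hq ⟨hu.1.trans hu'.2, h⟩⟩

theorem Set.notMem_Ioo_of_disjoint_Ioo {α : Type*} [LinearOrder α] [DenselyOrdered α]
    {a b a' b' : α} (h : Disjoint (Ioo a b) (Ioo a' b')) (h' : a' < b') :
    a' ∉ Ioo a b ∧ b' ∉ Ioo a b := by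
  rw [Ioo_disjoint_Ioo] at h
  refine ⟨fun ha => (lt_min ha.2 h').not_ge (h.trans (max_le ha.1.le le_rfl)), fun hb => ?_⟩
  rw [min_eq_right hb.2.le] at h
  exact (max_lt hb.1 h').not_ge h

section IntervalComplement

variable {a b : ℕ → ℝ} {c d : ℝ} {N : ℕ} {p q : ℝ}

noncomputable def intervalEndpoints (a b : ℕ → ℝ) (c d : ℝ) (N : ℕ) : Finset ℝ :=
  insert c (insert d ((Finset.range N).image a ∪ (Finset.range N).image b))

/-- `[p, q]` is the closure of a connected component of `[c, d] \ ⋃_{j < N} (a j, b j)`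
(or a single point of it). -/
structure IsGap (a b : ℕ → ℝ) (c d : ℝ) (N : ℕ) (p q : ℝ) : Prop where
  left_mem : p ∈ intervalEndpoints a b c d N
  right_mem : q ∈ intervalEndpoints a b c d N
  le : p ≤ q
  notMem_Ioo : ∀ z ∈ intervalEndpoints a b c d N, z ∉ Ioo p q
  disjoint : ∀ j < N, Disjoint (Ioo p q) (Ioo (a j) (b j))

theorem mem_intervalEndpoints {z : ℝ} : z ∈ intervalEndpoints a b c d N ↔
    z = c ∨ z = d ∨ (∃ j < N, a j = z) ∨ ∃ j < N, b j = z := by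
  simp [intervalEndpoints]

theorem left_mem_intervalEndpoints : c ∈ intervalEndpoints a b c d N :=
  mem_intervalEndpoints.2 (Or.inl rfl)

theorem right_mem_intervalEndpoints : d ∈ intervalEndpoints a b c d N :=
  mem_intervalEndpoints.2 (Or.inr (Or.inl rfl))

theorem apply_left_mem_intervalEndpoints {j : ℕ} (hj : j < N) :
    a j ∈ intervalEndpoints a b c d N :=
  mem_intervalEndpoints.2 (Or.inr (Or.inr (Or.inl ⟨j, hj, rfl⟩)))

theorem apply_right_mem_intervalEndpoints {j : ℕ} (hj : j < N) :
    b j ∈ intervalEndpoints a b c d N :=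
  mem_intervalEndpoints.2 (Or.inr (Or.inr (Or.inr ⟨j, hj, rfl⟩)))

theorem mem_Icc_of_mem_intervalEndpoints (hab : ∀ i, c ≤ a i ∧ a i < b i ∧ b i ≤ d)
    {z : ℝ} (hz : z ∈ intervalEndpoints a b c d N) : z ∈ Icc c d := by
  have hcd : c ≤ d := (hab 0).1.trans ((hab 0).2.1.le.trans (hab 0).2.2)
  rcases mem_intervalEndpoints.1 hz with rfl | rfl | ⟨j, -, rfl⟩ | ⟨j, -, rfl⟩
  · exact ⟨le_rfl, hcd⟩
  · exact ⟨hcd, le_rfl⟩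
  · exact ⟨(hab j).1, (hab j).2.1.le.trans (hab j).2.2⟩
  · exact ⟨(hab j).1.trans (hab j).2.1.le, (hab j).2.2⟩

theorem notMem_Ioo_of_mem_intervalEndpoints (hab : ∀ i, c ≤ a i ∧ a i < b i ∧ b i ≤ d)
    (hdisj : Pairwise (Disjoint on fun i => Ioo (a i) (b i))) {z : ℝ}
    (hz : z ∈ intervalEndpoints a b c d N) (i : ℕ) : z ∉ Ioo (a i) (b i) := by
  rcases mem_intervalEndpoints.1 hz with rfl | rfl | ⟨j, -, rfl⟩ | ⟨j, -, rfl⟩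
  · exact fun h => (hab i).1.not_gt h.1
  · exact fun h => (hab i).2.2.not_gt h.2
  · rcases eq_or_ne i j with rfl | hij
    · exact fun h => lt_irrefl _ h.1
    · exact (notMem_Ioo_of_disjoint_Ioo (hdisj hij) (hab j).2.1).1
  · rcases eq_or_ne i j with rfl | hij
    · exact fun h => lt_irrefl _ h.2
    · exact (notMem_Ioo_of_disjoint_Ioo (hdisj hij) (hab j).2.1).2

theorem exists_isGap_mem_Icc {x : ℝ} (hx : x ∈ Icc c d \ ⋃ i, Ioo (a i) (b i)) (N : ℕ) :
    ∃ p q, IsGap a b c d N p q ∧ x ∈ Icc p q := by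
  classical
  set P := intervalEndpoints a b c d N
  obtain ⟨p, hp, hp_max⟩ := (P.filter (· ≤ x)).exists_max_image id
    ⟨c, Finset.mem_filter.2 ⟨left_mem_intervalEndpoints, hx.1.1⟩⟩
  obtain ⟨q, hq, hq_min⟩ := (P.filter (x ≤ ·)).exists_min_image id
    ⟨d, Finset.mem_filter.2 ⟨right_mem_intervalEndpoints, hx.1.2⟩⟩
  rw [Finset.mem_filter] at hp hq
  have hx_le : x ∈ P → q ≤ x ∧ x ≤ p := fun hxP =>
    ⟨hq_min x (Finset.mem_filter.2 ⟨hxP, le_rfl⟩), hp_max x (Finset.mem_filter.2 ⟨hxP, le_rfl⟩)⟩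
  have hnotMem : ∀ z ∈ P, z ∉ Ioo p q := fun z hz hzpq => by
    rcases le_total z x with h | h
    · exact (hp_max z (Finset.mem_filter.2 ⟨hz, h⟩)).not_gt hzpq.1
    · exact (hq_min z (Finset.mem_filter.2 ⟨hz, h⟩)).not_gt hzpq.2
  refine ⟨p, q, ⟨hp.1, hq.1, hp.2.trans hq.2, hnotMem, fun j hj => ?_⟩, hp.2, hq.2⟩
  rw [Set.disjoint_left]
  intro u hu hu'
  have haP : a j ∈ P := apply_left_mem_intervalEndpoints hj
  have hbP : b j ∈ P := apply_right_mem_intervalEndpoints hj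
  obtain ⟨hap, hqb⟩ := le_and_le_of_notMem_Ioo hu hu' (hnotMem _ haP) (hnotMem _ hbP)
  -- `x` lies in `[a j, b j]` but not in `(a j, b j)`, so it is an endpoint and `[p, q] = {x}`.
  have hxP : x ∈ P := by
    rcases (hap.trans hp.2).eq_or_lt with h | h
    · exact h ▸ haP
    · have hbx : b j ≤ x := not_lt.1 fun h' => hx.2 (mem_iUnion.2 ⟨j, h, h'⟩)
      exact le_antisymm hbx (hq.2.trans hqb) ▸ hbP
  linarith [hx_le hxP, hu.1, hu.2]

theorem finite_setOf_isGap : {G : ℝ × ℝ | IsGap a b c d N G.1 G.2}.Finite :=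
  (intervalEndpoints a b c d N ×ˢ intervalEndpoints a b c d N).finite_toSet.subset
    fun _ hG => Finset.mem_product.2 ⟨hG.left_mem, hG.right_mem⟩

instance (a b : ℕ → ℝ) (c d : ℝ) (N : ℕ) : Countable {G : ℝ × ℝ // IsGap a b c d N G.1 G.2} :=
  finite_setOf_isGap.countable.to_subtype

theorem IsGap.eq_of_Ioo_subset {p' q' : ℝ} (hG : IsGap a b c d N p q)
    (hG' : IsGap a b c d N p' q') {i : ℕ} (hi : a i < b i) (h : Ioo (a i) (b i) ⊆ Ioo p q)
    (h' : Ioo (a i) (b i) ⊆ Ioo p' q') : p = p' ∧ q = q' := by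
  obtain ⟨m, hm⟩ := nonempty_Ioo.2 hi
  obtain ⟨hp'p, hqq'⟩ := le_and_le_of_notMem_Ioo (h hm) (h' hm)
    (hG.notMem_Ioo _ hG'.left_mem) (hG.notMem_Ioo _ hG'.right_mem)
  obtain ⟨hpp', hq'q⟩ := le_and_le_of_notMem_Ioo (h' hm) (h hm)
    (hG'.notMem_Ioo _ hG.left_mem) (hG'.notMem_Ioo _ hG.right_mem)
  exact ⟨le_antisymm hpp' hp'p, le_antisymm hqq' hq'q⟩

-- Since the complement of the intervals is null, a gap is filled by the later intervals in it.
theorem IsGap.ediam_Icc_le (hab : ∀ i, c ≤ a i ∧ a i < b i ∧ b i ≤ d)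
    (hdisj : Pairwise (Disjoint on fun i => Ioo (a i) (b i)))
    (hnull : volume (Icc c d \ ⋃ i, Ioo (a i) (b i)) = 0) (hG : IsGap a b c d N p q) :
    Metric.ediam (Icc p q) ≤ ∑' i, {i | N ≤ i ∧ Ioo (a i) (b i) ⊆ Ioo p q}.indicator
      (fun i => volume (Ioo (a i) (b i))) i := by
  set A := {i | N ≤ i ∧ Ioo (a i) (b i) ⊆ Ioo p q}
  have hcover : Ioo p q ⊆ (Icc c d \ ⋃ i, Ioo (a i) (b i)) ∪ ⋃ i ∈ A, Ioo (a i) (b i) := by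
    intro u hu
    by_cases hu' : ∃ i, u ∈ Ioo (a i) (b i)
    · obtain ⟨i, hi⟩ := hu'
      have hiN : N ≤ i := not_lt.1 fun hiN => disjoint_left.1 (hG.disjoint i hiN) hu hi
      obtain ⟨hpa, hbq⟩ := le_and_le_of_notMem_Ioo hi hu
        (notMem_Ioo_of_mem_intervalEndpoints hab hdisj hG.left_mem i)
        (notMem_Ioo_of_mem_intervalEndpoints hab hdisj hG.right_mem i)
      exact Or.inr (mem_biUnion ⟨hiN, Ioo_subset_Ioo hpa hbq⟩ hi)
    · refine Or.inl ⟨⟨?_, ?_⟩, by simpa using hu'⟩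
      · exact (mem_Icc_of_mem_intervalEndpoints hab hG.left_mem).1.trans hu.1.le
      · exact hu.2.le.trans (mem_Icc_of_mem_intervalEndpoints hab hG.right_mem).2
  calc Metric.ediam (Icc p q) = volume (Ioo p q) := by rw [Real.ediam_Icc, Real.volume_Ioo]
    _ ≤ volume (Icc c d \ ⋃ i, Ioo (a i) (b i)) + volume (⋃ i ∈ A, Ioo (a i) (b i)) :=
      (measure_mono hcover).trans (measure_union_le _ _)
    _ ≤ ∑' i : A, volume (Ioo (a i) (b i)) := by
      rw [hnull, zero_add]
      exact measure_biUnion_le _ A.to_countable _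
    _ = _ := tsum_subtype A fun i => volume (Ioo (a i) (b i))

theorem tsum_ediam_isGap_rpow_le {s : ℝ} (hs0 : 0 < s) (hs1 : s ≤ 1)
    (hab : ∀ i, c ≤ a i ∧ a i < b i ∧ b i ≤ d)
    (hdisj : Pairwise (Disjoint on fun i => Ioo (a i) (b i)))
    (hnull : volume (Icc c d \ ⋃ i, Ioo (a i) (b i)) = 0) (N : ℕ) :
    ∑' G : {G : ℝ × ℝ // IsGap a b c d N G.1 G.2}, Metric.ediam (Icc G.1.1 G.1.2) ^ s ≤
      ∑' i, (Ici N).indicator (fun i => volume (Ioo (a i) (b i)) ^ s) i := by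
  set σ : ℕ → ℝ≥0∞ := fun i => volume (Ioo (a i) (b i))
  set A : ℝ × ℝ → Set ℕ := fun G => {i | N ≤ i ∧ Ioo (a i) (b i) ⊆ Ioo G.1 G.2}
  have hgap : ∀ G : {G : ℝ × ℝ // IsGap a b c d N G.1 G.2},
      Metric.ediam (Icc G.1.1 G.1.2) ^ s ≤ ∑' i, (A G).indicator (fun i => σ i ^ s) i := by
    intro G
    calc Metric.ediam (Icc G.1.1 G.1.2) ^ s ≤ (∑' i, (A G).indicator σ i) ^ s :=
          rpow_le_rpow (G.2.ediam_Icc_le hab hdisj hnull) hs0.le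
      _ ≤ ∑' i, (A G).indicator σ i ^ s := rpow_tsum_le_tsum_rpow_s5 _ hs0 hs1
      _ = ∑' i, (A G).indicator (fun i => σ i ^ s) i := by
        refine tsum_congr fun i => ?_
        by_cases hi : i ∈ A G <;> simp [hi, zero_rpow_of_pos hs0]
  have hunique : ∀ i, ∑' G : {G : ℝ × ℝ // IsGap a b c d N G.1 G.2},
      (A G).indicator (fun i => σ i ^ s) i ≤ (Ici N).indicator (fun i => σ i ^ s) i := by
    intro i
    by_cases hi : N ≤ i
    · rw [indicator_of_mem (mem_Ici.2 hi)]
      refine tsum_indicator_const_le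
        (s := {G : {G : ℝ × ℝ // IsGap a b c d N G.1 G.2} | i ∈ A G}) ?_ _
      intro G hG G' hG'
      obtain ⟨hp, hq⟩ := G.2.eq_of_Ioo_subset G'.2 (hab i).2.1 hG.2 hG'.2
      exact Subtype.ext (Prod.ext hp hq)
    · have : ∀ G : ℝ × ℝ, i ∉ A G := fun G h => hi h.1
      simp [this]
  calc _ ≤ ∑' G : {G : ℝ × ℝ // IsGap a b c d N G.1 G.2}, ∑' i,
          (A G).indicator (fun i => σ i ^ s) i := ENNReal.tsum_le_tsum hgap
    _ = ∑' i, ∑' G : {G : ℝ × ℝ // IsGap a b c d N G.1 G.2},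
          (A G).indicator (fun i => σ i ^ s) i := ENNReal.tsum_comm
    _ ≤ _ := ENNReal.tsum_le_tsum hunique

theorem hausdorffMeasure_Icc_diff_iUnion_Ioo_eq_zero {s : ℝ} (hs0 : 0 < s) (hs1 : s ≤ 1)
    (hab : ∀ i, c ≤ a i ∧ a i < b i ∧ b i ≤ d)
    (hdisj : Pairwise (Disjoint on fun i => Ioo (a i) (b i)))
    (hnull : volume (Icc c d \ ⋃ i, Ioo (a i) (b i)) = 0)
    (hsum : ∑' i, volume (Ioo (a i) (b i)) ^ s ≠ ∞) :
    μH[s] (Icc c d \ ⋃ i, Ioo (a i) (b i)) = 0 := by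
  have hvol : ∑' i, volume (Ioo (a i) (b i)) ≠ ∞ := by
    rw [← measure_iUnion hdisj fun _ => measurableSet_Ioo]
    refine ne_top_of_le_ne_top (measure_Icc_lt_top (a := c) (b := d)).ne
      (measure_mono (iUnion_subset fun i => ?_))
    exact Ioo_subset_Icc_self.trans (Icc_subset_Icc (hab i).1 (hab i).2.2)
  have hdiam : ∀ N, ∀ G : {G : ℝ × ℝ // IsGap a b c d N G.1 G.2}, Metric.ediam (Icc G.1.1 G.1.2) ≤
      ∑' i, (Ici N).indicator (fun i => volume (Ioo (a i) (b i))) i := fun N G =>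
    (G.2.ediam_Icc_le hab hdisj hnull).trans (ENNReal.tsum_le_tsum fun i =>
      indicator_le_indicator_of_subset (fun i hi => hi.1) (fun _ => zero_le) i)
  have hcover : ∀ N, Icc c d \ ⋃ i, Ioo (a i) (b i) ⊆
      ⋃ G : {G : ℝ × ℝ // IsGap a b c d N G.1 G.2}, Icc G.1.1 G.1.2 := fun N x hx =>
    let ⟨p, q, hG, hxpq⟩ := exists_isGap_mem_Icc hx N
    mem_iUnion.2 ⟨⟨(p, q), hG⟩, hxpq⟩
  refine le_antisymm ?_ zero_le
  calc μH[s] (Icc c d \ ⋃ i, Ioo (a i) (b i))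
      ≤ liminf (fun N => ∑' G : {G : ℝ × ℝ // IsGap a b c d N G.1 G.2},
          Metric.ediam (Icc G.1.1 G.1.2) ^ s) atTop :=
        Measure.hausdorffMeasure_le_liminf_tsum
          (ι := fun N => {G : ℝ × ℝ // IsGap a b c d N G.1 G.2}) s _ _
          (tendsto_tsum_indicator_Ici_atTop hvol)
          (fun N G => Icc G.1.1 G.1.2) (Eventually.of_forall hdiam) (Eventually.of_forall hcover)
    _ ≤ liminf (fun N => ∑' i, (Ici N).indicator (fun i => volume (Ioo (a i) (b i)) ^ s) i)
          atTop :=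
        liminf_le_liminf (Eventually.of_forall (tsum_ediam_isGap_rpow_le hs0 hs1 hab hdisj hnull))
    _ = 0 := (tendsto_tsum_indicator_Ici_atTop hsum).liminf_eq

end IntervalComplement

theorem mul_rpow_one_sub_le_setIntegral {a b C θ : ℝ} {h : ℝ → ℝ} (hab : a < b) (hC : 0 ≤ C)
    (hθ : 0 ≤ θ) (hh : IntegrableOn h (Ioo a b))
    (hbound : ∀ t ∈ Ioo a b, C * (b - t) ^ (-θ) ≤ h t) :
    C * (b - a) ^ (1 - θ) ≤ ∫ t in Ioo a b, h t := by
  have hlow : ∀ t ∈ Ioo a b, C * (b - a) ^ (-θ) ≤ h t := fun t ht =>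
    (mul_le_mul_of_nonneg_left (Real.rpow_le_rpow_of_nonpos (by linarith [ht.2])
      (by linarith [ht.1]) (neg_nonpos.2 hθ)) hC).trans (hbound t ht)
  calc C * (b - a) ^ (1 - θ) = C * (b - a) ^ (-θ) * volume.real (Ioo a b) := by
        rw [Real.volume_real_Ioo_of_le hab.le, mul_assoc, ← Real.rpow_add_one (sub_pos.2 hab).ne',
          neg_add_eq_sub]
    _ ≤ ∫ t in Ioo a b, h t :=
      setIntegral_ge_of_const_le_real measurableSet_Ioo measure_Ioo_lt_top.ne hlow hh

theorem tsum_volume_Ioo_rpow_ne_top {a b : ℕ → ℝ} {C θ : ℝ} {h : ℝ → ℝ} (hC : 0 < C)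
    (hθ : 0 ≤ θ) (hab : ∀ i, a i < b i)
    (hdisj : Pairwise (Disjoint on fun i => Ioo (a i) (b i)))
    (hh : IntegrableOn h (⋃ i, Ioo (a i) (b i)))
    (hbound : ∀ i, ∀ t ∈ Ioo (a i) (b i), C * (b i - t) ^ (-θ) ≤ h t) :
    ∑' i, volume (Ioo (a i) (b i)) ^ (1 - θ) ≠ ∞ := by
  have hnonneg : ∀ i, 0 ≤ (b i - a i) ^ (1 - θ) := fun i =>
    Real.rpow_nonneg (sub_pos.2 (hab i)).le _
  have hsum : Summable fun i => (b i - a i) ^ (1 - θ) := by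
    refine (summable_mul_left_iff hC.ne').1 <|
      (hasSum_integral_iUnion (fun _ => measurableSet_Ioo) hdisj hh).summable.of_nonneg_of_le
        (fun i => mul_nonneg hC.le (hnonneg i)) fun i => ?_
    exact mul_rpow_one_sub_le_setIntegral (hab i) hC.le hθ
      (hh.mono_set (subset_iUnion (fun i => Ioo (a i) (b i)) i)) (hbound i)
  simp_rw [Real.volume_Ioo, ofReal_rpow_of_pos (sub_pos.2 (hab _))]
  rw [← ofReal_tsum_of_nonneg hnonneg hsum]
  exact ofReal_ne_top

theorem hausdorff_measure_singular_set_zero_general (T θ C : ℝ)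
    (hθ : θ ∈ Set.Ioo (0 : ℝ) 1) (hC : 0 < C)
    (a b : ℕ → ℝ) (hab : ∀ i, 0 ≤ a i ∧ a i < b i ∧ b i ≤ T)
    (hdisj : Pairwise (Function.onFun Disjoint fun i => Set.Ioo (a i) (b i)))
    (S : Set ℝ) (hS : S = Set.Icc 0 T \ ⋃ i, Set.Ioo (a i) (b i))
    (hnull : MeasureTheory.volume S = 0)
    (g : ℝ → ℝ)
    (hgint : MeasureTheory.IntegrableOn g (Set.Ioo 0 T))
    (hbound : ∀ i, ∀ t ∈ Set.Ioo (a i) (b i), C * (b i - t) ^ (-θ) ≤ 1 + g t) :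
    MeasureTheory.Measure.hausdorffMeasure (1 - θ) S = 0 := by
  subst hS
  have hint : IntegrableOn (fun t => 1 + g t) (⋃ i, Ioo (a i) (b i)) :=
    ((integrableOn_const measure_Ioo_lt_top.ne).add hgint).mono_set
      (iUnion_subset fun i => Ioo_subset_Ioo (hab i).1 (hab i).2.2)
  exact hausdorffMeasure_Icc_diff_iUnion_Ioo_eq_zero (by linarith [hθ.2]) (by linarith [hθ.1])
    hab hdisj hnull
    (tsum_volume_Ioo_rpow_ne_top hC hθ.1.le (fun i => (hab i).2.1) hdisj hint hbound)

/-- Abstract form of Theorem 4.3: if `S = [0,T] \ ⋃ᵢ (aᵢ, bᵢ)` has Lebesgue measure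
zero, `g ≥ 0` is integrable on `(0,T)`, and on each interval `(aᵢ, bᵢ)` the rate bound
`C (bᵢ - t)^(-θ) ≤ 1 + g t` holds with `θ ∈ (0,1)`, then the `(1-θ)`-dimensional
Hausdorff measure of `S` is zero. -/
theorem hausdorff_measure_singular_set_zero (T θ C : ℝ) (hT : 0 < T)
    (hθ : θ ∈ Set.Ioo (0 : ℝ) 1) (hC : 0 < C)
    (a b : ℕ → ℝ) (hab : ∀ i, 0 ≤ a i ∧ a i < b i ∧ b i ≤ T)
    (hdisj : Pairwise (Function.onFun Disjoint fun i => Set.Ioo (a i) (b i)))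
    (S : Set ℝ) (hS : S = Set.Icc 0 T \ ⋃ i, Set.Ioo (a i) (b i))
    (hnull : MeasureTheory.volume S = 0)
    (g : ℝ → ℝ) (hg0 : ∀ t ∈ Set.Ioo (0 : ℝ) T, 0 ≤ g t)
    (hgint : MeasureTheory.IntegrableOn g (Set.Ioo 0 T))
    (hbound : ∀ i, ∀ t ∈ Set.Ioo (a i) (b i), C * (b i - t) ^ (-θ) ≤ 1 + g t) :
    MeasureTheory.Measure.hausdorffMeasure (1 - θ) S = 0 :=
  hausdorff_measure_singular_set_zero_general T θ C hθ hC a b hab hdisj S hS hnull g hgint hbound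
end
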